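/- arXiv:1502.07697 — 3 statements merged into one kernel-verified Lean document; each statement's English description precedes it below -/
import Mathlib

section
/- Let F be the set of 1-Lipschitz functions from [0,1] to [−B,B], γ ∈ (0,B) with 1/γ, 2B/γ integers, and M ≥ 1. Partition each I_a = [(a−1)γ, aγ) at every level m ∈ {1,…,M} into 2^m equal subintervals I_a^(m,n). Let F^(M) be the set of functions f_c(x) = Σ_a c_a⁰ 1{x∈I_a} + Σ_{m=1}^M Σ_a Σ_{n=1}^{2^m} c_a^(m,n) 1{x∈I_a^(m,n)} with c_a⁰ ∈ {−B+jγ : 0 ≤ j ≤ 2B/γ} and c_a^(m,n) ∈ [−γ/2^{m−1}, γ/2^{m−1}]. Then F^(M) is a (γ/2^{M+1})-net of (F, ‖·‖_∞). -/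
open Real Set Finset

/-!
Extend `f` to a `1`-Lipschitz `g` on `ℝ` through the projection onto `[0,1]`. Give the level-`m`
cell with index `n` (of width `γ / 2^m`) the value of `g` at its midpoint, except that on level `0`
this value is rounded to the grid `-B + γℕ`. The coefficient of a cell is its value minus the value
of its parent cell, so the approximant telescopes to the value of the level-`M` cell containing `x`,
which is within `γ / 2^(M+1)` of `g x`. A child midpoint is `γ / 2^(m+1)` away from its parent's,
which bounds the coefficients; on level `1` the rounding error `γ / 2` is added, still below `γ`.
The paper's cell `I_a^(m,n)` is the level-`m` cell with global index `(a - 1) 2^m + n - 1`.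
-/

lemma abs_sub_natFloor_add_half_le {y : ℝ} (hy : 0 ≤ y) : |y - (⌊y⌋₊ + 1 / 2)| ≤ 1 / 2 := by
  have h₁ := Nat.floor_le hy
  have h₂ := Nat.lt_floor_add_one y
  rw [abs_le]
  constructor <;> linarith

lemma exists_grid_point_near {B γ y : ℝ} {J : ℕ} (hγ : 0 < γ) (hJ : (J : ℝ) * γ = 2 * B)
    (hy : y ∈ Icc (-B) B) : ∃ j ≤ J, |(-B + j * γ) - y| ≤ γ / 2 := by
  set t := (y + B) / γ
  have ht : 0 ≤ t := div_nonneg (by linarith [hy.1]) hγ.le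
  have htJ : t ≤ J := by
    rw [div_le_iff₀ hγ, hJ]
    linarith [hy.2]
  refine ⟨⌊t + 1 / 2⌋₊, ?_, ?_⟩
  · exact Nat.le_of_lt_succ <| (Nat.floor_lt (by positivity)).2 (by push_cast; linarith)
  · have hround := abs_sub_natFloor_add_half_le (y := t + 1 / 2) (by positivity)
    have hy_eq : y = -B + t * γ := by
      simp only [t]
      field_simp
      ring
    calc |(-B + ⌊t + 1 / 2⌋₊ * γ) - y| = |t + 1 / 2 - (⌊t + 1 / 2⌋₊ + 1 / 2)| * γ := by
          rw [hy_eq, ← abs_of_pos hγ, ← abs_mul, abs_of_pos hγ, ← abs_neg]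
          ring_nf
      _ ≤ 1 / 2 * γ := by gcongr
      _ = γ / 2 := by ring

lemma sum_Icc_one_sub_pred {G : Type*} [AddCommGroup G] (v : ℕ → G) (M : ℕ) :
    ∑ m ∈ Finset.Icc 1 M, (v m - v (m - 1)) = v M - v 0 := by
  induction M with
  | zero => simp
  | succ M ih =>
    rw [Finset.sum_Icc_succ_top (by omega), ih, Nat.add_sub_cancel]
    abel

noncomputable def dyadicMid (γ : ℝ) (m n : ℕ) : ℝ := (n + 1 / 2) * (γ / 2 ^ m)

lemma abs_sub_dyadicMid_floor_le {γ x : ℝ} (hγ : 0 < γ) (hx : 0 ≤ x) (m : ℕ) :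
    |x - dyadicMid γ m ⌊x * 2 ^ m / γ⌋₊| ≤ γ / 2 ^ (m + 1) := by
  have hw : 0 < γ / 2 ^ m := by positivity
  have hround := abs_sub_natFloor_add_half_le (y := x * 2 ^ m / γ) (by positivity)
  calc |x - dyadicMid γ m ⌊x * 2 ^ m / γ⌋₊|
      = |x * 2 ^ m / γ - (⌊x * 2 ^ m / γ⌋₊ + 1 / 2)| * (γ / 2 ^ m) := by
        rw [dyadicMid, ← abs_of_pos hw, ← abs_mul, abs_of_pos hw, sub_mul]
        field_simp
    _ ≤ 1 / 2 * (γ / 2 ^ m) := by gcongr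
    _ = γ / 2 ^ (m + 1) := by rw [pow_succ]; field_simp

lemma abs_dyadicMid_succ_sub_parent {γ : ℝ} (hγ : 0 ≤ γ) (m n : ℕ) :
    |dyadicMid γ (m + 1) n - dyadicMid γ m (n / 2)| = γ / 2 ^ (m + 2) := by
  obtain ⟨q, r, hr, rfl⟩ : ∃ q r, r < 2 ∧ n = 2 * q + r := ⟨n / 2, n % 2, by omega, by omega⟩
  have hdiff : dyadicMid γ (m + 1) (2 * q + r) - dyadicMid γ m q
      = (2 * r - 1 : ℝ) * (γ / 2 ^ (m + 2)) := by
    simp only [dyadicMid, pow_succ]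
    push_cast
    field_simp
    ring
  have hsign : |(2 * r - 1 : ℝ)| = 1 := by interval_cases r <;> norm_num
  rw [show (2 * q + r) / 2 = q by omega, hdiff, abs_mul, hsign, one_mul,
    abs_of_nonneg (by positivity)]

lemma natFloor_mul_two_pow_succ_div_two (x γ : ℝ) (m : ℕ) :
    ⌊x * 2 ^ (m + 1) / γ⌋₊ / 2 = ⌊x * 2 ^ m / γ⌋₊ := by
  rw [← Nat.floor_div_ofNat, pow_succ]
  congr 1
  ring

lemma sum_Icc_sub_parent_floor {G : Type*} [AddCommGroup G] (u : ℕ → ℕ → G) (x γ : ℝ)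
    (M : ℕ) :
    ∑ m ∈ Finset.Icc 1 M, (u m ⌊x * 2 ^ m / γ⌋₊ - u (m - 1) (⌊x * 2 ^ m / γ⌋₊ / 2))
      = u M ⌊x * 2 ^ M / γ⌋₊ - u 0 ⌊x / γ⌋₊ := by
  have hparent : ∀ m ∈ Finset.Icc 1 M, ⌊x * 2 ^ m / γ⌋₊ / 2 = ⌊x * 2 ^ (m - 1) / γ⌋₊ := by
    intro m hm
    obtain ⟨k, rfl⟩ : ∃ k, m = k + 1 := ⟨m - 1, by simp only [Finset.mem_Icc] at hm; omega⟩
    exact natFloor_mul_two_pow_succ_div_two x γ k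
  rw [Finset.sum_congr rfl fun m hm => by rw [hparent m hm],
    sum_Icc_one_sub_pred (fun m => u m ⌊x * 2 ^ m / γ⌋₊), pow_zero, mul_one]

noncomputable def dyadicLevelValue (g : ℝ → ℝ) (γ : ℝ) (c₀ : ℕ → ℝ) : ℕ → ℕ → ℝ
  | 0, a => c₀ a
  | m + 1, n => g (dyadicMid γ (m + 1) n)

lemma abs_dyadicLevelValue_sub_parent_le {g : ℝ → ℝ} {γ : ℝ} {c₀ : ℕ → ℝ}
    (hg : LipschitzWith 1 g) (hγ : 0 ≤ γ)
    (hc₀ : ∀ a, |c₀ a - g (dyadicMid γ 0 a)| ≤ γ / 2) (m n : ℕ) :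
    |dyadicLevelValue g γ c₀ (m + 1) n - dyadicLevelValue g γ c₀ m (n / 2)| ≤ γ / 2 ^ m := by
  have hstep : |g (dyadicMid γ (m + 1) n) - g (dyadicMid γ m (n / 2))| ≤ γ / 2 ^ (m + 2) := by
    rw [← abs_dyadicMid_succ_sub_parent hγ m n, ← Real.dist_eq, ← Real.dist_eq]
    simpa using hg.dist_le_mul (dyadicMid γ (m + 1) n) (dyadicMid γ m (n / 2))
  cases m with
  | zero =>
    calc |g (dyadicMid γ 1 n) - c₀ (n / 2)|
        ≤ |g (dyadicMid γ 1 n) - g (dyadicMid γ 0 (n / 2))|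
          + |c₀ (n / 2) - g (dyadicMid γ 0 (n / 2))| := by
          rw [abs_sub_comm (c₀ _)]
          exact abs_sub_le _ _ _
      _ ≤ γ / 2 ^ 2 + γ / 2 := add_le_add hstep (hc₀ _)
      _ ≤ γ / 2 ^ 0 := by linarith
  | succ k =>
    refine hstep.trans <| div_le_div_of_nonneg_left hγ (by positivity) ?_
    exact pow_le_pow_right₀ one_le_two (by omega)

theorem lipschitz_dyadic_refinement_net_general
    (B γ : ℝ) (hγ : γ ∈ Set.Ioo 0 B)
    (J : ℕ) (hJ : (J : ℝ) * γ = 2 * B)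
    (M : ℕ) (hM : 1 ≤ M)
    (f : ℝ → ℝ) (hlip : LipschitzOnWith 1 f (Set.Icc 0 1))
    (hrange : ∀ x ∈ Set.Icc (0 : ℝ) 1, f x ∈ Set.Icc (-B) B) :
    ∃ (c0 : ℕ → ℝ) (c : ℕ → ℕ → ℝ),
      (∀ a : ℕ, ∃ j : ℕ, j ≤ J ∧ c0 a = -B + j * γ) ∧
      (∀ m ∈ Finset.Icc 1 M, ∀ n : ℕ, |c m n| ≤ γ / 2 ^ (m - 1)) ∧
      ∀ x ∈ Set.Icc (0 : ℝ) 1,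
        |f x - (c0 ⌊x / γ⌋₊ + ∑ m ∈ Finset.Icc 1 M, c m ⌊x * 2 ^ m / γ⌋₊)|
          ≤ γ / 2 ^ (M + 1) := by
  have hγ₀ : 0 < γ := hγ.1
  set g : ℝ → ℝ := fun y => f (projIcc 0 1 zero_le_one y)
  have hg : LipschitzWith 1 g :=
    (hlip.to_restrict.comp (LipschitzWith.projIcc zero_le_one)).weaken (by simp)
  have hg_range (y : ℝ) : g y ∈ Icc (-B) B := hrange _ (projIcc 0 1 zero_le_one y).2
  choose j hjJ hj using fun a => exists_grid_point_near hγ₀ hJ (hg_range (dyadicMid γ 0 a))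
  set u := dyadicLevelValue g γ (fun a => -B + j a * γ)
  refine ⟨u 0, fun m n => u m n - u (m - 1) (n / 2), fun a => ⟨j a, hjJ a, rfl⟩, ?_, ?_⟩
  · intro m hm n
    obtain ⟨k, rfl⟩ : ∃ k, m = k + 1 := ⟨m - 1, by simp only [Finset.mem_Icc] at hm; omega⟩
    exact abs_dyadicLevelValue_sub_parent_le hg hγ₀.le hj k n
  · intro x hx
    obtain ⟨k, rfl⟩ : ∃ k, M = k + 1 := ⟨M - 1, by omega⟩
    have hfg : f x = g x := by simp only [g, projIcc_of_mem _ hx]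
    rw [sum_Icc_sub_parent_floor, add_sub_cancel, hfg]
    calc |g x - g (dyadicMid γ (k + 1) ⌊x * 2 ^ (k + 1) / γ⌋₊)|
        ≤ |x - dyadicMid γ (k + 1) ⌊x * 2 ^ (k + 1) / γ⌋₊| := by
          simpa [← Real.dist_eq] using hg.dist_le_mul x _
      _ ≤ γ / 2 ^ (k + 1 + 1) := abs_sub_dyadicMid_floor_le hγ₀ hx.1 _

/-- Dyadic refinement net for Lipschitz functions: every `1`-Lipschitz `f : [0,1] → [−B,B]`
is within sup-distance `γ/2^{M+1}` of a function of the form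
`x ↦ c⁰_{a(x)} + Σ_{m=1}^M c^{(m)}_{n_m(x)}`, where `a(x) = ⌊x/γ⌋` indexes the level-0
interval of length `γ`, `n_m(x) = ⌊x 2^m/γ⌋` indexes the level-`m` dyadic subinterval of
length `γ/2^m`, the `c⁰` lie on the grid `{−B + jγ : 0 ≤ j ≤ 2B/γ}` and
`|c^{(m)}| ≤ γ/2^{m−1}`. -/
theorem lipschitz_dyadic_refinement_net
    (B γ : ℝ) (hB : 0 < B) (hγ : γ ∈ Set.Ioo 0 B)
    (A J : ℕ) (hA : (A : ℝ) * γ = 1) (hJ : (J : ℝ) * γ = 2 * B)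
    (M : ℕ) (hM : 1 ≤ M)
    (f : ℝ → ℝ) (hlip : LipschitzOnWith 1 f (Set.Icc 0 1))
    (hrange : ∀ x ∈ Set.Icc (0 : ℝ) 1, f x ∈ Set.Icc (-B) B) :
    ∃ (c0 : ℕ → ℝ) (c : ℕ → ℕ → ℝ),
      (∀ a : ℕ, ∃ j : ℕ, j ≤ J ∧ c0 a = -B + j * γ) ∧
      (∀ m ∈ Finset.Icc 1 M, ∀ n : ℕ, |c m n| ≤ γ / 2 ^ (m - 1)) ∧
      ∀ x ∈ Set.Icc (0 : ℝ) 1,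
        |f x - (c0 ⌊x / γ⌋₊ + ∑ m ∈ Finset.Icc 1 M, c m ⌊x * 2 ^ m / γ⌋₊)|
          ≤ γ / 2 ^ (M + 1) :=
  lipschitz_dyadic_refinement_net_general B γ hγ J hJ M hM f hlip hrange
end

section
/- Let f: [0,1] → ℝ be q-times differentiable with each derivative f^(i) bounded by B in absolute value for 0 ≤ i ≤ q, and with f^(q) Hölder continuous of order α ∈ (0,1] with coefficient λ. Let I be an interval of length δ with center x₀, and suppose each f^(i)(x₀) is approximated by b_i with |f^(i)(x₀) − b_i| ≤ δ_y/2. Then the polynomial P(x) = Σ_{i=0}^q (b_i/i!)(x − x₀)^i satisfies |f(x) − P(x)| ≤ (e/2)δ_y + (λ/q!)(δ/2)^{q+α} for all x ∈ I. -/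
/-! Write `f = T + R` with `T` the degree-`q` Taylor polynomial at `x₀`. By Lagrange's remainder
for degree `q - 1`, `R(x) = (f⁽q⁾(ξ) - f⁽q⁾(x₀)) (x - x₀)^q / q!`, which the Hölder bound makes
at most `(λ/q!) |x - x₀|^(q+α)`. Replacing the coefficients `f⁽ⁱ⁾(x₀)` by `bᵢ` costs at most
`(δy/2) ∑ |x - x₀|^i / i! ≤ (e/2) δy`. -/

open Real Set Finset

open scoped Nat

theorem taylorWithinEval_uIcc_eq_sum {f : ℝ → ℝ} {n : ℕ} (hf : ContDiff ℝ n f) {x₀ x : ℝ}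
    (hx : x₀ ≠ x) :
    taylorWithinEval f n (uIcc x₀ x) x₀ x =
      ∑ i ∈ range (n + 1), iteratedDeriv i f x₀ / i ! * (x - x₀) ^ i := by
  rw [taylor_within_apply]
  refine sum_congr rfl fun i hi => ?_
  have hin : (i : WithTop ℕ∞) ≤ n := by exact_mod_cast Nat.lt_succ_iff.mp (mem_range.mp hi)
  rw [iteratedDerivWithin_eq_iteratedDeriv (uniqueDiffOn_uIcc hx)
    ((hf.of_le hin).contDiffAt) left_mem_uIcc, smul_eq_mul]
  ring

/-- Lagrange's remainder written through the oscillation of `f⁽ⁿ⁾`, so that only `n`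
derivatives are needed. -/
theorem exists_mem_uIcc_sub_taylor_eq {f : ℝ → ℝ} {n : ℕ} (hf : ContDiff ℝ n f) (x₀ x : ℝ) :
    ∃ ξ ∈ uIcc x₀ x,
      f x - ∑ i ∈ range (n + 1), iteratedDeriv i f x₀ / i ! * (x - x₀) ^ i =
        (iteratedDeriv n f ξ - iteratedDeriv n f x₀) / n ! * (x - x₀) ^ n := by
  rcases eq_or_ne x₀ x with rfl | hx
  · refine ⟨x₀, left_mem_uIcc, ?_⟩
    rw [sum_range_succ', sum_eq_zero fun i _ => by simp]
    simp
  cases n with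
  | zero => exact ⟨x, right_mem_uIcc, by simp⟩
  | succ m =>
    obtain ⟨ξ, hξ, hrem⟩ :=
      taylor_mean_remainder_lagrange_iteratedDeriv hx (by exact_mod_cast hf.contDiffOn)
    rw [taylorWithinEval_uIcc_eq_sum (hf.of_le (by exact_mod_cast m.le_succ)) hx] at hrem
    refine ⟨ξ, uIoo_subset_uIcc_self hξ, ?_⟩
    rw [sum_range_succ, ← sub_sub, hrem]
    ring

theorem abs_sub_taylor_le_of_holder {f : ℝ → ℝ} {n : ℕ} (hf : ContDiff ℝ n f)
    {lam α x₀ x : ℝ} (hlam : 0 ≤ lam) (hα : 0 < α)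
    (hholder : ∀ y ∈ uIcc x₀ x, |iteratedDeriv n f y - iteratedDeriv n f x₀| ≤ lam * |y - x₀| ^ α) :
    |f x - ∑ i ∈ range (n + 1), iteratedDeriv i f x₀ / i ! * (x - x₀) ^ i| ≤
      lam / n ! * |x - x₀| ^ ((n : ℝ) + α) := by
  obtain ⟨ξ, hξ, hrem⟩ := exists_mem_uIcc_sub_taylor_eq hf x₀ x
  have hξx : |ξ - x₀| ^ α ≤ |x - x₀| ^ α :=
    rpow_le_rpow (abs_nonneg _) (abs_sub_left_of_mem_uIcc hξ) hα.le
  rw [hrem, abs_mul, abs_div, Nat.abs_cast, abs_pow,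
    rpow_add' (abs_nonneg _) (by positivity), rpow_natCast]
  calc |iteratedDeriv n f ξ - iteratedDeriv n f x₀| / n ! * |x - x₀| ^ n
      ≤ lam * |x - x₀| ^ α / n ! * |x - x₀| ^ n := by
        gcongr
        exact (hholder ξ hξ).trans (mul_le_mul_of_nonneg_left hξx hlam)
    _ = lam / n ! * (|x - x₀| ^ n * |x - x₀| ^ α) := by ring

theorem abs_sum_div_factorial_mul_pow_sub_le {a b : ℕ → ℝ} {n : ℕ} {ε : ℝ}
    (hab : ∀ i ≤ n, |a i - b i| ≤ ε) (h : ℝ) :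
    |∑ i ∈ range (n + 1), a i / i ! * h ^ i - ∑ i ∈ range (n + 1), b i / i ! * h ^ i| ≤
      ε * exp |h| := by
  have hε : 0 ≤ ε := (abs_nonneg _).trans (hab 0 n.zero_le)
  rw [← sum_sub_distrib]
  calc |∑ i ∈ range (n + 1), (a i / i ! * h ^ i - b i / i ! * h ^ i)|
      ≤ ∑ i ∈ range (n + 1), |a i / i ! * h ^ i - b i / i ! * h ^ i| := abs_sum_le_sum_abs _ _
    _ ≤ ∑ i ∈ range (n + 1), ε * (|h| ^ i / i !) := by
        refine sum_le_sum fun i hi => ?_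
        rw [← sub_mul, ← sub_div, abs_mul, abs_div, Nat.abs_cast, abs_pow, div_mul_eq_mul_div,
          mul_div_assoc]
        gcongr
        exact hab i (Nat.lt_succ_iff.mp (mem_range.mp hi))
    _ = ε * ∑ i ∈ range (n + 1), |h| ^ i / i ! := (mul_sum _ _ _).symm
    _ ≤ ε * exp |h| := by gcongr; exact sum_le_exp_of_nonneg (abs_nonneg h) _

theorem taylor_grid_polynomial_approx_general
    (q : ℕ) (α lam δ δy : ℝ) (hα : α ∈ Set.Ioc (0 : ℝ) 1)
    (hlam : 0 < lam)
    (f : ℝ → ℝ) (hf : ContDiff ℝ q f)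
    (hholder : ∀ x ∈ Set.Icc (0 : ℝ) 1, ∀ y ∈ Set.Icc (0 : ℝ) 1,
      |iteratedDeriv q f x - iteratedDeriv q f y| ≤ lam * |x - y| ^ α)
    (x₀ : ℝ) (hI : Set.Icc (x₀ - δ / 2) (x₀ + δ / 2) ⊆ Set.Icc (0 : ℝ) 1)
    (b : ℕ → ℝ) (hb : ∀ i ≤ q, |iteratedDeriv i f x₀ - b i| ≤ δy / 2) :
    ∀ x ∈ Set.Icc (x₀ - δ / 2) (x₀ + δ / 2),
      |f x - ∑ i ∈ Finset.range (q + 1), b i / (Nat.factorial i) * (x - x₀) ^ i|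
        ≤ (Real.exp 1 / 2) * δy + (lam / Nat.factorial q) * (δ / 2) ^ ((q : ℝ) + α) := by
  intro x hx
  have hx₀I : x₀ ∈ Icc (x₀ - δ / 2) (x₀ + δ / 2) := by
    constructor <;> linarith [hx.1, hx.2]
  have hx01 := hI hx
  have hx₀01 := hI hx₀I
  have hdist : |x - x₀| ≤ δ / 2 := abs_sub_le_iff.mpr ⟨by linarith [hx.2], by linarith [hx.1]⟩
  have hseg : uIcc x₀ x ⊆ Icc 0 1 := uIcc_subset_Icc hx₀01 hx01
  have htaylor := abs_sub_taylor_le_of_holder hf hlam.le hα.1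
    (fun y hy => hholder y (hseg hy) x₀ hx₀01)
  have hcoeff : |∑ i ∈ range (q + 1), iteratedDeriv i f x₀ / i ! * (x - x₀) ^ i -
      ∑ i ∈ range (q + 1), b i / i ! * (x - x₀) ^ i| ≤ δy / 2 * exp 1 :=
    (abs_sum_div_factorial_mul_pow_sub_le hb _).trans <| by
      gcongr
      · exact (abs_nonneg _).trans (hb 0 q.zero_le)
      · exact abs_sub_le_iff.mpr ⟨by linarith [hx01.2, hx₀01.1], by linarith [hx01.1, hx₀01.2]⟩
  calc _ ≤ lam / q ! * |x - x₀| ^ ((q : ℝ) + α) + δy / 2 * exp 1 :=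
        (abs_sub_le _ _ _).trans (add_le_add htaylor hcoeff)
    _ ≤ lam / q ! * (δ / 2) ^ ((q : ℝ) + α) + δy / 2 * exp 1 := by
        gcongr
        exact add_nonneg q.cast_nonneg hα.1.le
    _ = _ := by ring

/-- Piecewise-polynomial approximation of a Hölder-smooth function. If `f` is `q`-times
continuously differentiable with `|f⁽ⁱ⁾| ≤ B` on `[0,1]`, `f⁽q⁾` is `α`-Hölder with
coefficient `lam`, `I = [x₀ − δ/2, x₀ + δ/2] ⊆ [0,1]`, and `b i` approximates
`f⁽ⁱ⁾(x₀)` up to `δy/2`, then the polynomial `P(x) = Σ_{i≤q} (b i / i!) (x − x₀)^i`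
satisfies `|f(x) − P(x)| ≤ (e/2) δy + (lam/q!) (δ/2)^{q+α}` on `I`. -/
theorem taylor_grid_polynomial_approx
    (q : ℕ) (α B lam δ δy : ℝ) (hα : α ∈ Set.Ioc (0 : ℝ) 1)
    (hB : 0 < B) (hlam : 0 < lam) (hδ : 0 < δ) (hδy : 0 < δy)
    (f : ℝ → ℝ) (hf : ContDiff ℝ q f)
    (hbound : ∀ i ≤ q, ∀ x ∈ Set.Icc (0 : ℝ) 1, |iteratedDeriv i f x| ≤ B)
    (hholder : ∀ x ∈ Set.Icc (0 : ℝ) 1, ∀ y ∈ Set.Icc (0 : ℝ) 1,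
      |iteratedDeriv q f x - iteratedDeriv q f y| ≤ lam * |x - y| ^ α)
    (x₀ : ℝ) (hI : Set.Icc (x₀ - δ / 2) (x₀ + δ / 2) ⊆ Set.Icc (0 : ℝ) 1)
    (b : ℕ → ℝ) (hb : ∀ i ≤ q, |iteratedDeriv i f x₀ - b i| ≤ δy / 2) :
    ∀ x ∈ Set.Icc (x₀ - δ / 2) (x₀ + δ / 2),
      |f x - ∑ i ∈ Finset.range (q + 1), b i / (Nat.factorial i) * (x - x₀) ^ i|
        ≤ (Real.exp 1 / 2) * δy + (lam / Nat.factorial q) * (δ / 2) ^ ((q : ℝ) + α) :=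
  taylor_grid_polynomial_approx_general q α lam δ δy hα hlam f hf hholder x₀ hI b hb
end

section
/- Let s ≤ d be positive integers, φ₁,…,φ_d : X → [−B,B], and F = {Σ_{j=1}^d u_j φ_j : u ∈ Δ_d, ‖u‖₀ = s} the set of s-sparse convex combinations. If the metric entropy satisfies log N_∞(F, ε) ≤ c (log C(d,s) + s log(1 + 1/(ε√s))) for a constant c, then plugging γ = 1/√T into the Dudley-type regret bound Reg_T ≤ c₁B²(1 + log N_∞(F,γ)) + c₂B√T ∫₀^γ √(log N_∞(F,ε)) dε gives Reg_T = O(s log(1 + dT/s)) up to constants depending on B. -/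
open Real MeasureTheory Set

/-!
Since `log (1 + 1 / (ε √s)) ≤ 1 - log ε` on `(0, 1]`, the entropy hypothesis gives
`log N(ε) ≤ a - b log ε` with `a = c (log C(d,s) + s)` and `b = c s`. With the crude bound
`√x ≤ 1 + x` and `∫₀^γ log = γ log γ - γ`, both `1 + log N(γ)` and `√T ∫₀^γ √(log N)` at
`γ = 1/√T` are at most `1 + c log C(d,s) + 2cs + cs log √T`. Each summand is `O(s log(1 + dT/s))`
because `log C(d,s) ≤ s (1 + log (d/s))` (from `s^s / s! ≤ e^s`) and `log (1 + dT/s) ≥ log 2`.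
-/

theorem Real.log_choose_le {d s : ℕ} (hs : 0 < s) (hsd : s ≤ d) :
    log (d.choose s) ≤ s * (1 + log (d / s)) := by
  have hs' : (0 : ℝ) < s := by exact_mod_cast hs
  have hd : (0 : ℝ) < d := by exact_mod_cast hs.trans_le hsd
  have hchoose : (0 : ℝ) < d.choose s := by exact_mod_cast Nat.choose_pos hsd
  have hfact : (0 : ℝ) < s.factorial := by exact_mod_cast s.factorial_pos
  have hstirling : (s : ℝ) ^ s ≤ s.factorial * exp s := by
    rw [← div_le_iff₀' hfact]; exact Real.pow_div_factorial_le_exp _ hs'.le s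
  calc log (d.choose s) ≤ log ((d : ℝ) ^ s / s.factorial) :=
        log_le_log hchoose (Nat.choose_le_pow_div s d)
    _ ≤ log ((d / s : ℝ) ^ s * exp s) := by
        refine log_le_log (by positivity) ?_
        rw [div_pow, div_mul_eq_mul_div, div_le_div_iff₀ hfact (by positivity)]
        calc (d : ℝ) ^ s * s ^ s ≤ d ^ s * (s.factorial * exp s) := by gcongr
          _ = _ := by ring
    _ = s * (1 + log (d / s)) := by
        rw [log_mul (by positivity) (exp_pos _).ne', log_exp, log_pow]
        ring

theorem Real.log_one_add_one_div_mul_le {ε t : ℝ} (hε : 0 < ε) (hε₁ : ε ≤ 1) (ht : 1 ≤ t) :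
    log (1 + 1 / (ε * t)) ≤ 1 - log ε := by
  calc log (1 + 1 / (ε * t)) ≤ log ((1 + ε) / ε) := by
        refine log_le_log (by positivity) ?_
        rw [add_div, div_self hε.ne', add_comm (1 / ε)]
        gcongr
        nlinarith
    _ = log (1 + ε) - log ε := log_div (by positivity) hε.ne'
    _ ≤ 1 - log ε := by
        gcongr; linarith [log_le_sub_one_of_pos (x := 1 + ε) (by positivity)]

theorem setIntegral_sqrt_le_of_le_sub_mul_log {g : ℝ → ℝ} {γ a b : ℝ} (hγ : 0 < γ)
    (hg₀ : ∀ ε ∈ Ioc 0 γ, 0 ≤ g ε) (hg : ∀ ε ∈ Ioc 0 γ, g ε ≤ a - b * log ε) :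
    ∫ ε in Ioc 0 γ, √(g ε) ≤ γ * (1 + a + b - b * log γ) := by
  have hlog : IntervalIntegrable log volume 0 γ := intervalIntegral.intervalIntegrable_log'
  have hint : IntegrableOn (fun ε => 1 + a - b * log ε) (Ioc 0 γ) :=
    (integrableOn_const measure_Ioc_lt_top.ne).sub
      (((intervalIntegrable_iff_integrableOn_Ioc_of_le hγ.le).mp hlog).const_mul b)
  have hval : ∫ ε in Ioc 0 γ, (1 + a - b * log ε) = γ * (1 + a + b - b * log γ) := by
    rw [← intervalIntegral.integral_of_le hγ.le, intervalIntegral.integral_sub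
      intervalIntegrable_const (hlog.const_mul b),
      intervalIntegral.integral_const_mul, integral_log_from_zero]
    simp only [intervalIntegrable_const, intervalIntegral.integral_add,
      intervalIntegral.integral_const, sub_zero, smul_eq_mul, mul_one]
    ring
  rw [← hval]
  refine integral_mono_of_nonneg (.of_forall fun _ => sqrt_nonneg _) hint
    ((ae_restrict_iff' measurableSet_Ioc).mpr (.of_forall fun ε hε => ?_))
  have hle := hg ε hε
  have hnonneg := hg₀ ε hε
  rw [sqrt_le_iff]
  constructor <;> nlinarith

theorem entropy_terms_le_sparse_rate {c : ℝ} (hc : 0 ≤ c) {d s T : ℕ} (hs : 0 < s) (hsd : s ≤ d)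
    (hT : 1 ≤ T) :
    1 + c * log (d.choose s) + 2 * c * s + c * s * log √T
      ≤ (2 + 8 * c) * (s * log (1 + d * T / s)) := by
  set L := log (1 + d * T / s)
  have hs₁ : (1 : ℝ) ≤ s := by exact_mod_cast hs
  have hT₁ : (1 : ℝ) ≤ T := by exact_mod_cast hT
  have hsd' : (s : ℝ) ≤ d := by exact_mod_cast hsd
  have hd : (0 : ℝ) < d := by linarith
  have hT_le : (T : ℝ) ≤ d * T / s := by rw [le_div_iff₀ (by positivity)]; nlinarith
  have hratio : (d / s : ℝ) ≤ d * T / s := by gcongr; nlinarith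
  have hL : 1 / 2 ≤ L := by
    calc (1 / 2 : ℝ) ≤ log 2 := by linarith [log_two_gt_d9]
      _ ≤ L := log_le_log (by norm_num) (by linarith)
  have hlog_ratio : log (d / s) ≤ L :=
    log_le_log (by positivity) (by linarith)
  have hlog_sqrt : log √T ≤ L :=
    log_le_log (by positivity) (by linarith [sqrt_le_self_iff.mpr (Or.inr hT₁)])
  calc 1 + c * log (d.choose s) + 2 * c * s + c * s * log √T
      ≤ s + c * (s * (1 + log (d / s))) + 2 * c * s + c * s * L := by
        gcongr
        exact log_choose_le hs hsd
    _ ≤ 2 * s * L + c * (s * (3 * L)) + 2 * c * s * (2 * L) + c * s * L := by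
        have hchoose : c * (s * (1 + log (d / s))) ≤ c * (s * (3 * L)) := by gcongr; linarith
        have hs_le : (s : ℝ) ≤ 2 * s * L := by nlinarith
        have hcs_le : 2 * c * s ≤ 2 * c * s * (2 * L) :=
          le_mul_of_one_le_right (by positivity) (by linarith)
        linarith
    _ = (2 + 8 * c) * (s * L) := by ring

/-- Sparse high-dimensional online regression via the Dudley-type bound. If the metric
entropy of the class of `s`-sparse convex combinations of `d` features satisfies
`log N(ε) ≤ c (log C(d,s) + s log(1 + 1/(ε√s)))`, then plugging `γ = 1/√T` into the
Dudley-type regret bound `c₁B²(1 + log N(γ)) + c₂B√T ∫_0^γ √(log N ε) dε` yields a bound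
`≤ c' s log(1 + dT/s)` with a constant `c'` depending only on `B, c, c₁, c₂`. -/
theorem sparse_regression_dudley_bound
    (B c c₁ c₂ : ℝ) (hB : 0 < B) (hc : 0 < c) (hc₁ : 0 < c₁) (hc₂ : 0 < c₂) :
    ∃ c' : ℝ, 0 < c' ∧ ∀ (d s T : ℕ), 0 < s → s ≤ d → 1 ≤ T →
      ∀ N : ℝ → ℝ, (∀ ε > 0, 1 ≤ N ε) →
      (∀ ε > 0, Real.log (N ε)
          ≤ c * (Real.log (d.choose s) + s * Real.log (1 + 1 / (ε * Real.sqrt s)))) →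
      c₁ * B ^ 2 * (1 + Real.log (N (1 / Real.sqrt T)))
          + c₂ * B * Real.sqrt T *
            ∫ ε in Set.Ioc 0 (1 / Real.sqrt T), Real.sqrt (Real.log (N ε))
        ≤ c' * s * Real.log (1 + d * T / s) := by
  refine ⟨(c₁ * B ^ 2 + c₂ * B) * (2 + 8 * c), by positivity, ?_⟩
  intro d s T hs hsd hT N hN hentropy
  set γ := 1 / √T
  set E := 1 + c * log (d.choose s) + 2 * c * s + c * s * log √T
  have hsqrtT : 1 ≤ √T := one_le_sqrt.mpr (by exact_mod_cast hT)
  have hγ : 0 < γ := by positivity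
  have hγ₁ : γ ≤ 1 := (div_le_one (by positivity)).mpr hsqrtT
  have hγT : √T * γ = 1 := mul_one_div_cancel (by positivity)
  have hlogγ : log γ = -log √T := by rw [show γ = (√T)⁻¹ from one_div _, log_inv]
  have hcs : 0 ≤ c * s := by positivity
  have hlogN : ∀ ε ∈ Ioc 0 γ, log (N ε) ≤ c * log (d.choose s) + c * s - c * s * log ε := by
    intro ε ⟨hε, hεγ⟩
    have hs₁ : (1 : ℝ) ≤ √s := one_le_sqrt.mpr (by exact_mod_cast hs)
    calc log (N ε) ≤ c * (log (d.choose s) + s * log (1 + 1 / (ε * √s))) := hentropy ε hε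
      _ ≤ c * (log (d.choose s) + s * (1 - log ε)) := by
        gcongr; exact log_one_add_one_div_mul_le hε (hεγ.trans hγ₁) hs₁
      _ = _ := by ring
  have hfirst : 1 + log (N γ) ≤ E := by
    have hlogNγ := hlogN γ ⟨hγ, le_rfl⟩
    rw [hlogγ] at hlogNγ
    linarith
  have hsecond : √T * ∫ ε in Ioc 0 γ, √(log (N ε)) ≤ E := by
    have hintegral :=
      setIntegral_sqrt_le_of_le_sub_mul_log hγ (fun ε hε => log_nonneg (hN ε hε.1)) hlogN
    calc √T * ∫ ε in Ioc 0 γ, √(log (N ε))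
        ≤ √T * (γ * (1 + (c * log (d.choose s) + c * s) + c * s - c * s * log γ)) := by
          gcongr
      _ = E := by rw [hlogγ]; linear_combination E * hγT
  calc c₁ * B ^ 2 * (1 + log (N γ)) + c₂ * B * √T * ∫ ε in Ioc 0 γ, √(log (N ε))
      ≤ c₁ * B ^ 2 * E + c₂ * B * E := by
        rw [mul_assoc (c₂ * B)]; gcongr
    _ ≤ (c₁ * B ^ 2 + c₂ * B) * ((2 + 8 * c) * (s * log (1 + d * T / s))) := by
        rw [← add_mul]; gcongr; exact entropy_terms_le_sparse_rate hc.le hs hsd hT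
    _ = _ := by ring
end
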